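/- arXiv:1405.0530 — 2 statements merged into one kernel-verified Lean document; each statement's English description precedes it below -/
import Mathlib

section
/- Let X_1,…,X_n be i.i.d. random variables on X and fix f ∈ H with ‖f‖_H ≤ R in an RKHS with kernel bound C_k. Let R_T(f) denote the empirical pairwise hinge-loss risk (1/n²) Σ_{i,j: r_i>r_j} L(f(X_i) − f(X_j)) and R_P(f) = E[R_T(f)]. Then for any ε > 0, Prob(|R_T(f) − R_P(f)| ≥ ε) ≤ 2 exp(−ε² n / (2(1 + 2√(C_k) R)²)). -/
/-!
Changing one sample `x i` changes at most `2n - 1` of the `n²` hinge terms of `R_T`, and each term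
lies in `[0, 1 + 2√C_k R]` because `|f| ≤ √C_k R`; so `R_T` has bounded differences
`c = 2(1 + 2√C_k R)/n`. McDiarmid's inequality, obtained from Hoeffding's lemma by peeling off
one coordinate of the product measure at a time, makes `R_T - 𝔼 R_T` sub-Gaussian with variance
proxy `n c² / 4`, and the Chernoff bounds for both tails give the estimate.
-/

open MeasureTheory ProbabilityTheory Real NNReal

lemma exists_forall_mem_Icc_of_abs_sub_le {α : Type*} [Nonempty α] {g : α → ℝ} {c : ℝ}
    (hg : ∀ y y', |g y - g y'| ≤ c) : ∃ a, ∀ y, g y ∈ Set.Icc a (a + c) := by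
  obtain ⟨y₀⟩ := ‹Nonempty α›
  have hbdd : BddBelow (Set.range g) :=
    ⟨g y₀ - c, Set.forall_mem_range.2 fun y => by linarith [(abs_le.1 (hg y₀ y)).2]⟩
  refine ⟨⨅ y, g y, fun y => ⟨ciInf_le hbdd y, ?_⟩⟩
  have : g y - c ≤ ⨅ y, g y := le_ciInf fun y' => by linarith [(abs_le.1 (hg y y')).2]
  linarith

namespace ProbabilityTheory

variable {α β : Type*} [MeasurableSpace α] [MeasurableSpace β]

lemma integrable_of_abs_sub_le {μ : Measure α} [IsProbabilityMeasure μ] {g : α → ℝ}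
    (hg : AEMeasurable g μ) {c : ℝ} (hc : ∀ y y', |g y - g y'| ≤ c) : Integrable g μ := by
  have := nonempty_of_isProbabilityMeasure μ
  obtain ⟨a, ha⟩ := exists_forall_mem_Icc_of_abs_sub_le hc
  exact Integrable.of_mem_Icc a (a + c) hg (ae_of_all μ ha)

lemma hasSubgaussianMGF_sub_integral_of_abs_sub_le {μ : Measure α} [IsProbabilityMeasure μ]
    {g : α → ℝ} (hg : AEMeasurable g μ) {c : ℝ≥0} (hc : ∀ y y', |g y - g y'| ≤ c) :
    HasSubgaussianMGF (fun y => g y - μ[g]) ((c / 2) ^ 2) μ := by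
  have := nonempty_of_isProbabilityMeasure μ
  obtain ⟨a, ha⟩ := exists_forall_mem_Icc_of_abs_sub_le hc
  simpa using hasSubgaussianMGF_of_mem_Icc hg (ae_of_all μ ha)

lemma HasSubgaussianMGF.measure_abs_ge_le {μ : Measure α} [IsFiniteMeasure μ] {X : α → ℝ}
    {c : ℝ≥0} (h : HasSubgaussianMGF X c μ) {ε : ℝ} (hε : 0 ≤ ε) :
    μ {ω | ε ≤ |X ω|} ≤ ENNReal.ofReal (2 * exp (-ε ^ 2 / (2 * c))) := by
  have hsplit : {ω | ε ≤ |X ω|} = {ω | ε ≤ X ω} ∪ {ω | ε ≤ (-X) ω} := by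
    ext ω; simp only [Set.mem_ofPred_eq, Set.mem_union, Pi.neg_apply, le_abs', le_neg, or_comm]
  have hbound {Y : α → ℝ} (hY : HasSubgaussianMGF Y c μ) :
      μ {ω | ε ≤ Y ω} ≤ ENNReal.ofReal (exp (-ε ^ 2 / (2 * c))) := by
    rw [← ofReal_measureReal]
    exact ENNReal.ofReal_le_ofReal (hY.measure_ge_le hε)
  calc μ {ω | ε ≤ |X ω|} ≤ μ {ω | ε ≤ X ω} + μ {ω | ε ≤ (-X) ω} :=
        hsplit ▸ measure_union_le _ _
    _ ≤ ENNReal.ofReal (exp (-ε ^ 2 / (2 * c))) + ENNReal.ofReal (exp (-ε ^ 2 / (2 * c))) :=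
        add_le_add (hbound h) (hbound h.neg)
    _ = ENNReal.ofReal (2 * exp (-ε ^ 2 / (2 * c))) := by
        rw [← ENNReal.ofReal_add (by positivity) (by positivity)]
        ring_nf

lemma hasSubgaussianMGF_prod_add_of_section {μ : Measure α} {ν : Measure β}
    [IsProbabilityMeasure μ] [IsProbabilityMeasure ν] {V : α × β → ℝ} {U : β → ℝ}
    {cV cU : ℝ≥0} (hV : Measurable V) (hVsec : ∀ z, HasSubgaussianMGF (fun y => V (y, z)) cV μ)
    (hU : HasSubgaussianMGF U cU ν) :
    HasSubgaussianMGF (fun p => V p + U p.2) (cV + cU) (μ.prod ν) := by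
  have hsec (t : ℝ) (z : β) :
      ∫ y, exp (t * (V (y, z) + U z)) ∂μ = mgf (fun y => V (y, z)) μ t * exp (t * U z) := by
    simp_rw [mul_add, exp_add, integral_mul_const, mgf]
  have hsec_le (t : ℝ) (z : β) :
      ∫ y, exp (t * (V (y, z) + U z)) ∂μ ≤ exp (cV * t ^ 2 / 2) * exp (t * U z) := by
    rw [hsec]
    gcongr
    exact (hVsec z).mgf_le t
  have hint (t : ℝ) : Integrable (fun p => exp (t * (V p + U p.2))) (μ.prod ν) := by
    have hmeas : AEStronglyMeasurable (fun p => exp (t * (V p + U p.2))) (μ.prod ν) :=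
      (hV.aemeasurable.add hU.aemeasurable.comp_snd).const_mul t |>.exp.aestronglyMeasurable
    refine (integrable_prod_iff' hmeas).2 ⟨ae_of_all _ fun z => ?_, ?_⟩
    · simp_rw [mul_add, exp_add]
      exact ((hVsec z).integrable_exp_mul t).mul_const _
    · simp_rw [Real.norm_eq_abs, abs_of_pos (exp_pos _)]
      refine ((hU.integrable_exp_mul t).const_mul (exp (cV * t ^ 2 / 2))).mono' ?_
        (ae_of_all _ fun z => ?_)
      · exact hmeas.prod_swap.integral_prod_right'
      · rw [Real.norm_eq_abs, abs_of_nonneg (integral_nonneg fun _ => (exp_pos _).le)]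
        exact hsec_le t z
  refine ⟨hint, fun t => ?_⟩
  calc mgf (fun p => V p + U p.2) (μ.prod ν) t
      = ∫ z, ∫ y, exp (t * (V (y, z) + U z)) ∂μ ∂ν := integral_prod_symm _ (hint t)
    _ ≤ ∫ z, exp (cV * t ^ 2 / 2) * exp (t * U z) ∂ν :=
        integral_mono (hint t).integral_prod_right ((hU.integrable_exp_mul t).const_mul _)
          (hsec_le t)
    _ = exp (cV * t ^ 2 / 2) * mgf U ν t := integral_const_mul _ _
    _ ≤ exp (cV * t ^ 2 / 2) * exp (cU * t ^ 2 / 2) := by gcongr; exact hU.mgf_le t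
    _ = exp (↑(cV + cU) * t ^ 2 / 2) := by rw [← exp_add]; push_cast; ring_nf

lemma hasSubgaussianMGF_prod_sub_integral_of_abs_sub_le {μ : Measure α} {ν : Measure β}
    [IsProbabilityMeasure μ] [IsProbabilityMeasure ν] {H : α × β → ℝ} (hH : Measurable H)
    {c cU : ℝ≥0} (hc : ∀ y y' z, |H (y, z) - H (y', z)| ≤ c)
    (hU : HasSubgaussianMGF (fun z => ∫ y, H (y, z) ∂μ - ∫ z', ∫ y, H (y, z') ∂μ ∂ν) cU ν) :
    HasSubgaussianMGF (fun p => H p - ∫ p', H p' ∂μ.prod ν) ((c / 2) ^ 2 + cU) (μ.prod ν) := by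
  set m : β → ℝ := fun z => ∫ y, H (y, z) ∂μ
  have hsec (z : β) : HasSubgaussianMGF (fun y => H (y, z) - m z) ((c / 2) ^ 2) μ :=
    hasSubgaussianMGF_sub_integral_of_abs_sub_le (hH.comp measurable_prodMk_right).aemeasurable
      fun y y' => hc y y' z
  have hm : Measurable m := hH.stronglyMeasurable.integral_prod_left'.measurable
  set I := ∫ z, m z ∂ν
  have hHI : HasSubgaussianMGF (fun p => H p - I) ((c / 2) ^ 2 + cU) (μ.prod ν) :=
    (hasSubgaussianMGF_prod_add_of_section (hH.sub (hm.comp measurable_snd)) hsec hU).congr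
      (ae_of_all _ fun p => by simp only [Pi.sub_apply, Function.comp_apply]; ring)
  have hHint : Integrable H (μ.prod ν) :=
    (hHI.integrable.add (integrable_const I)).congr (ae_of_all _ fun p => by simp)
  rwa [integral_prod_symm H hHint]

/-- McDiarmid's inequality. For the induction step, fix the last `n` coordinates: as a function of
the first one, `F` has oscillation at most `c 0` (Hoeffding's lemma applies), and its mean over
the first coordinate inherits the bounded differences of `F` in the remaining ones. -/
theorem hasSubgaussianMGF_pi_sub_integral_of_abs_update_sub_le {𝒳 : Type*} [MeasurableSpace 𝒳]
    {n : ℕ} (P : Fin n → Measure 𝒳) [∀ i, IsProbabilityMeasure (P i)]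
    {F : (Fin n → 𝒳) → ℝ} (c : Fin n → ℝ≥0) (hF : Measurable F)
    (hc : ∀ x i y, |F (Function.update x i y) - F x| ≤ c i) :
    HasSubgaussianMGF (fun x => F x - ∫ x', F x' ∂Measure.pi P) (∑ i, (c i / 2) ^ 2)
      (Measure.pi P) := by
  induction n with
  | zero =>
    have hconst : ∀ x, F x - ∫ x', F x' ∂Measure.pi P = 0 := fun x => by
      rw [integral_congr_ae (ae_of_all _ fun x' => congrArg F (Subsingleton.elim x' x)),
        integral_const]
      simp
    simp [hconst]
  | succ n ih =>
    set e := MeasurableEquiv.piFinSuccAbove (fun _ : Fin (n + 1) => 𝒳) 0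
    have he (y : 𝒳) (z : Fin n → 𝒳) : e.symm (y, z) = Fin.cons y z := Fin.insertNth_zero' y z
    have hmp := measurePreserving_piFinSuccAbove P 0
    simp only [Fin.succAbove_zero] at hmp
    set H : 𝒳 × (Fin n → 𝒳) → ℝ := fun p => F (e.symm p)
    have hH : Measurable H := hF.comp e.symm.measurable
    have hosc (y y' : 𝒳) (z : Fin n → 𝒳) : |H (y, z) - H (y', z)| ≤ c 0 := by
      simpa [H, he, Fin.update_cons_zero] using hc (Fin.cons y' z) 0 y
    have hsec_int (z : Fin n → 𝒳) : Integrable (fun y => H (y, z)) (P 0) :=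
      integrable_of_abs_sub_le (hH.comp measurable_prodMk_right).aemeasurable fun y y' =>
        hosc y y' z
    set m : (Fin n → 𝒳) → ℝ := fun z => ∫ y, H (y, z) ∂P 0
    have hm : Measurable m := hH.stronglyMeasurable.integral_prod_left'.measurable
    have hmc (z : Fin n → 𝒳) (i : Fin n) (y : 𝒳) :
        |m (Function.update z i y) - m z| ≤ c i.succ := by
      rw [← integral_sub (hsec_int _) (hsec_int _)]
      have := norm_integral_le_of_norm_le_const (μ := P 0) (C := c i.succ)
        (f := fun y' => H (y', Function.update z i y) - H (y', z)) (ae_of_all _ fun y' => by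
          simpa [H, he, Fin.cons_update] using hc (Fin.cons y' z) i.succ y)
      simpa using this
    have hstep := hasSubgaussianMGF_prod_sub_integral_of_abs_sub_le hH hosc
      (ih (fun i => P i.succ) (fun i => c i.succ) hm hmc)
    have hFH : ∫ x, F x ∂Measure.pi P = ∫ p, H p ∂(P 0).prod (Measure.pi fun i => P i.succ) := by
      simp only [← hmp.integral_comp' H, H, e, MeasurableEquiv.symm_apply_apply]
    rw [Fin.sum_univ_succ, hFH]
    exact (HasSubgaussianMGF.of_map e.measurable.aemeasurable (by rwa [hmp.map_eq])).congr
      (ae_of_all _ fun x => by simp [H])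

theorem iIndepFun.hasSubgaussianMGF_sub_integral_of_abs_update_sub_le {𝒳 : Type*}
    [MeasurableSpace 𝒳] {μ : Measure α} {n : ℕ} {X : Fin n → α → 𝒳} (hindep : iIndepFun X μ)
    (hX : ∀ i, AEMeasurable (X i) μ) {F : (Fin n → 𝒳) → ℝ} (c : Fin n → ℝ≥0)
    (hF : Measurable F) (hc : ∀ x i y, |F (Function.update x i y) - F x| ≤ c i) :
    HasSubgaussianMGF (fun ω => F (fun i => X i ω) - ∫ ω', F (fun i => X i ω') ∂μ)
      (∑ i, (c i / 2) ^ 2) μ := by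
  have := hindep.isProbabilityMeasure
  have hmap_prob (i : Fin n) : IsProbabilityMeasure (μ.map (X i)) :=
    Measure.isProbabilityMeasure_map (hX i)
  have hZ : AEMeasurable (fun ω i => X i ω) μ := aemeasurable_pi_lambda _ hX
  have h := hasSubgaussianMGF_pi_sub_integral_of_abs_update_sub_le (fun i => μ.map (X i)) c hF hc
  rw [← hindep.map_fun_eq_pi_map hX, integral_map hZ hF.aestronglyMeasurable] at h
  exact h.of_map hZ

end ProbabilityTheory

lemma abs_sum_sum_update_sub_le {ι γ : Type*} [Fintype ι] [DecidableEq ι]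
    (K : ι → ι → γ → γ → ℝ) {B : ℝ} (hK : ∀ i j a b, K i j a b ∈ Set.Icc 0 B)
    (x : ι → γ) (i₀ : ι) (y : γ) :
    |∑ i, ∑ j, K i j (Function.update x i₀ y i) (Function.update x i₀ y j)
        - ∑ i, ∑ j, K i j (x i) (x j)| ≤ 2 * Fintype.card ι * B := by
  set x' := Function.update x i₀ y
  have hterm (i j : ι) : |K i j (x' i) (x' j) - K i j (x i) (x j)|
      ≤ (if i = i₀ then B else 0) + (if j = i₀ then B else 0) := by
    have h := hK i j (x' i) (x' j)
    have h' := hK i j (x i) (x j)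
    have hB : 0 ≤ B := h'.1.trans h'.2
    have hdiff := abs_sub_le_of_nonneg_of_le h.1 h.2 h'.1 h'.2
    rcases eq_or_ne i i₀ with rfl | hi
    · have : (0 : ℝ) ≤ if j = i then B else 0 := by split_ifs <;> linarith
      rw [if_pos rfl]
      linarith
    rcases eq_or_ne j i₀ with rfl | hj
    · rw [if_pos rfl, if_neg hi]
      linarith
    · simp [x', hi, hj]
  calc _ = |∑ i, ∑ j, (K i j (x' i) (x' j) - K i j (x i) (x j))| := by
        simp only [Finset.sum_sub_distrib]
    _ ≤ ∑ i, ∑ j, |K i j (x' i) (x' j) - K i j (x i) (x j)| :=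
        (Finset.abs_sum_le_sum_abs _ _).trans
          (Finset.sum_le_sum fun i _ => Finset.abs_sum_le_sum_abs _ _)
    _ ≤ ∑ i, ∑ j, ((if i = i₀ then B else 0) + (if j = i₀ then B else 0)) := by
        gcongr with i _ j _; exact hterm i j
    _ = 2 * Fintype.card ι * B := by
        simp [Finset.sum_add_distrib, Finset.sum_ite_eq']; ring

lemma abs_pairwise_mean_update_sub_le {n : ℕ} {γ : Type*} (K : Fin n → Fin n → γ → γ → ℝ)
    {B : ℝ} (hK : ∀ i j a b, K i j a b ∈ Set.Icc 0 B) (x : Fin n → γ) (i₀ : Fin n) (y : γ) :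
    |1 / (n : ℝ) ^ 2 * ∑ i, ∑ j, K i j (Function.update x i₀ y i) (Function.update x i₀ y j)
        - 1 / (n : ℝ) ^ 2 * ∑ i, ∑ j, K i j (x i) (x j)| ≤ 2 * B / n := by
  have h := abs_sum_sum_update_sub_le K hK x i₀ y
  rw [Fintype.card_fin] at h
  rw [← mul_sub, abs_mul, abs_of_nonneg (by positivity)]
  calc _ ≤ 1 / (n : ℝ) ^ 2 * (2 * n * B) := by gcongr
    _ = 2 * B / n := by
        rcases Nat.eq_zero_or_pos n with rfl | hn
        · simp
        · field_simp

lemma max_zero_one_sub_mem_Icc {s D : ℝ} (hs : |s| ≤ D) : max 0 (1 - s) ∈ Set.Icc 0 (1 + D) :=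
  ⟨le_max_left _ _, max_le (by linarith [abs_nonneg s]) (by linarith [neg_abs_le s])⟩

theorem stmt5_general (𝒳 : Type*) [MeasurableSpace 𝒳] (n : ℕ) (hn : 0 < n)
    (Ω : Type*) [MeasureSpace Ω] [IsProbabilityMeasure (ℙ : Measure Ω)]
    (X : Fin n → Ω → 𝒳) (hXmeas : ∀ i, Measurable (X i))
    (hindep : iIndepFun X ℙ)
    (f : 𝒳 → ℝ) (hfmeas : Measurable f)
    (Ck R : ℝ)
    (hfbd : ∀ x, |f x| ≤ Real.sqrt Ck * R)
    (r : Fin n → ℝ) (L : ℝ → ℝ) (hL : L = fun t => max 0 (1 - t))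
    (RT : (Fin n → 𝒳) → ℝ)
    (hRT : RT = fun x => (1 / (n : ℝ) ^ 2) *
      ∑ i, ∑ j, if r j < r i then L (f (x i) - f (x j)) else 0)
    (ε : ℝ) (hε : 0 < ε) :
    ℙ {ω | ε ≤ |RT (fun i => X i ω) - ∫ ω', RT (fun i => X i ω') ∂ℙ|}
      ≤ ENNReal.ofReal
          (2 * Real.exp (-(ε ^ 2) * n / (2 * (1 + 2 * Real.sqrt Ck * R) ^ 2))) := by
  obtain ⟨ω₀⟩ := nonempty_of_isProbabilityMeasure (ℙ : Measure Ω)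
  set B := 1 + 2 * √Ck * R
  have hB : 0 ≤ B := by linarith [(abs_nonneg _).trans (hfbd (X ⟨0, hn⟩ ω₀))]
  have hK (i j : Fin n) (a b : 𝒳) :
      (if r j < r i then L (f a - f b) else 0) ∈ Set.Icc 0 B := by
    split_ifs
    · subst hL
      exact max_zero_one_sub_mem_Icc (by linarith [abs_sub (f a) (f b), hfbd a, hfbd b])
    · exact ⟨le_rfl, hB⟩
  have hRTmeas : Measurable RT := by
    subst hRT hL
    refine (Finset.measurable_sum _ fun i _ => Finset.measurable_sum _ fun j _ => ?_).const_mul _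
    by_cases hij : r j < r i <;> simp only [hij, if_true, if_false] <;> fun_prop
  set c : ℝ≥0 := ⟨2 * B / n, by positivity⟩
  have hc : (c : ℝ) = 2 * B / n := rfl
  have hRTc (x : Fin n → 𝒳) (i : Fin n) (y : 𝒳) : |RT (Function.update x i y) - RT x| ≤ c := by
    rw [hc, hRT]
    exact abs_pairwise_mean_update_sub_le _ hK x i y
  have hnR : (0 : ℝ) < n := Nat.cast_pos.2 hn
  calc _ ≤ ENNReal.ofReal (2 * exp (-ε ^ 2 / (2 * ((∑ _ : Fin n, (c / 2) ^ 2 : ℝ≥0) : ℝ)))) :=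
        (hindep.hasSubgaussianMGF_sub_integral_of_abs_update_sub_le
          (fun i => (hXmeas i).aemeasurable) (fun _ => c) hRTmeas hRTc).measure_abs_ge_le hε.le
    _ = _ := by
        congr 3
        push_cast
        rw [Finset.sum_const, Finset.card_univ, Fintype.card_fin, nsmul_eq_mul, hc]
        field_simp

/-- Concentration of the empirical pairwise hinge-loss risk of a fixed RKHS
function `f` with `‖f‖_H ≤ R`:
`Prob(|R_T(f) − R_P(f)| ≥ ε) ≤ 2 exp(−ε²n / (2(1+2√C_k R)²))`. -/
theorem stmt5 (𝒳 : Type*) [MeasurableSpace 𝒳] (n : ℕ) (hn : 0 < n)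
    (Ω : Type*) [MeasureSpace Ω] [IsProbabilityMeasure (ℙ : Measure Ω)]
    (X : Fin n → Ω → 𝒳) (hXmeas : ∀ i, Measurable (X i))
    (hindep : iIndepFun X ℙ)
    (P : Measure 𝒳) (hlaw : ∀ i, Measure.map (X i) ℙ = P)
    (f : 𝒳 → ℝ) (hfmeas : Measurable f)
    (Ck R : ℝ) (hCk : 0 ≤ Ck) (hR : 0 ≤ R)
    (hfbd : ∀ x, |f x| ≤ Real.sqrt Ck * R)
    (r : Fin n → ℝ) (L : ℝ → ℝ) (hL : L = fun t => max 0 (1 - t))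
    (RT : (Fin n → 𝒳) → ℝ)
    (hRT : RT = fun x => (1 / (n : ℝ) ^ 2) *
      ∑ i, ∑ j, if r j < r i then L (f (x i) - f (x j)) else 0)
    (ε : ℝ) (hε : 0 < ε) :
    ℙ {ω | ε ≤ |RT (fun i => X i ω) - ∫ ω', RT (fun i => X i ω') ∂ℙ|}
      ≤ ENNReal.ofReal
          (2 * Real.exp (-(ε ^ 2) * n / (2 * (1 + 2 * Real.sqrt Ck * R) ^ 2))) :=
  stmt5_general 𝒳 n hn Ω X hXmeas hindep f hfmeas Ck R hfbd r L hL RT hRT ε hε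
end

section
/- (Vapnik symmetrization) Let 𝒳 be a set, S a system of measurable subsets of 𝒳, and P a probability measure. For a sample x ∈ 𝒳^n and A ∈ S define the empirical frequency ν_x(A) = |{i : x_i ∈ A}|/n. If n > 2/ε, then P^n{x : sup_{A∈S} |ν_x(A) − P(A)| > ε} ≤ 2 P^{2n}{(x,x') : sup_{A∈S} |ν_x(A) − ν_{x'}(A)| > ε/2}. -/
/-!
Fix a sample `x` and a set `A ∈ S` with `|ν_x(A) - P(A)| > ε`, say `ν_x(A) > P(A) + ε`.
For the ghost sample `x'`, `n ν_{x'}(A)` is binomial with mean `n P(A)`, and on the event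
`ν_{x'}(A) ≤ P(A) + ε/2` the two frequencies differ by more than `ε/2`. Since `n ε/2 > 1`,
this event contains `n ν_{x'}(A) ≤ ⌊n P(A)⌋ + 1`, which has probability at least `1/2` by the
median property of the binomial law; integrating the bound `1/2` over `x` gives the factor `2`.

For the median property, the upper tail `P(X > m)` of `X ∼ Bin(n, p)` increases with `p`, so it
suffices to bound it by `1/2` at `p = m/n`. If `2m ≤ n`, the tail is the integral over
`[0, m/n]` of the density `n B_{n-1,m}`, which is dominated by its reflection about `m/n`;
if `2m ≥ n`, the binomial weights pair off as `b(m + 1 + i) ≤ b(m - i)`.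
-/

open MeasureTheory Polynomial Finset

lemma cast_choose_succ_mul {n k : ℕ} (hk : k ≤ n) :
    ((k : ℝ) + 1) * n.choose (k + 1) = ((n : ℝ) - k) * n.choose k := by
  have h : ((n.choose (k + 1) * (k + 1) : ℕ) : ℝ) = ((n.choose k * (n - k) : ℕ) : ℝ) :=
    congrArg Nat.cast (Nat.choose_succ_right_eq n k)
  push_cast [Nat.cast_sub hk] at h
  linarith

lemma sq_sub_sq_mul_sq_le {u m : ℝ} (a : ℝ) (hu : 0 ≤ u) (hum : u ≤ m) :
    (u ^ 2 - a ^ 2) * m ^ 2 ≤ ((m + 1) ^ 2 - a ^ 2) * u ^ 2 := by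
  nlinarith [mul_nonneg (sq_nonneg a) (sub_nonneg.2 (pow_le_pow_left₀ hu hum 2)),
    mul_nonneg (sq_nonneg u) (by linarith : 0 ≤ 2 * m + 1)]

lemma choose_mul_pow_le_choose_mul_pow {n m i : ℕ} (hnm : n ≤ 2 * m) (hi : m + i < n) :
    (n.choose (m + 1 + i) : ℝ) * m ^ (2 * i + 1)
      ≤ (n.choose (m - i) : ℝ) * ((n : ℝ) - m) ^ (2 * i + 1) := by
  have hmn : (m : ℝ) < n := by exact_mod_cast (show m < n by omega)
  induction i with
  | zero =>
    have h := cast_choose_succ_mul (n := n) (k := m) (by omega)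
    simp only [add_zero, Nat.sub_zero, mul_zero, zero_add, pow_one]
    nlinarith [(Nat.cast_nonneg (n.choose (m + 1)) : (0 : ℝ) ≤ _)]
  | succ i ih =>
    have hup := cast_choose_succ_mul (n := n) (k := m + 1 + i) (by omega)
    have hdown := cast_choose_succ_mul (n := n) (k := m - (i + 1)) (by omega)
    rw [show m - (i + 1) + 1 = m - i by omega] at hdown
    push_cast [Nat.cast_sub (show i + 1 ≤ m by omega)] at hup hdown
    have hu : (n : ℝ) - m ≤ m := by
      have : (n : ℝ) ≤ 2 * m := by exact_mod_cast hnm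
      linarith
    have hi' : (i : ℝ) + 2 ≤ n - m := by
      have : ((m + i + 1 + 1 : ℕ) : ℝ) ≤ n := by exact_mod_cast hi
      push_cast at this
      linarith
    -- from `i` to `i + 1`, the left side gains the factor `(n - m - 1 - i) m² / (m + i + 2)` and
    -- the right side the factor `(m - i) (n - m)² / (n - m + i + 1)`
    have hgain : ((n : ℝ) - m - 1 - i) * ((n : ℝ) - m + i + 1) * (m : ℝ) ^ 2
        ≤ ((m : ℝ) - i) * ((m : ℝ) + i + 2) * ((n : ℝ) - m) ^ 2 := by
      linear_combination sq_sub_sq_mul_sq_le ((i : ℝ) + 1) (sub_nonneg.2 hmn.le) hu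
    have hpos : (0 : ℝ) < ((m : ℝ) + i + 2) * ((n : ℝ) - m + i + 1) := by nlinarith
    have hlow : (0 : ℝ) ≤ (n - m - 1 - i) * (n - m + i + 1) * m ^ 2 := by
      have : (0 : ℝ) ≤ n - m - 1 - i := by linarith
      positivity
    rw [show m + 1 + (i + 1) = m + 1 + i + 1 by omega,
      show 2 * (i + 1) + 1 = 2 * i + 1 + 2 by omega, pow_add (m : ℝ), pow_add ((n : ℝ) - m),
      ← mul_le_mul_iff_of_pos_right hpos]
    calc (n.choose (m + 1 + i + 1) : ℝ) * (m ^ (2 * i + 1) * m ^ 2)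
          * ((m + i + 2) * (n - m + i + 1))
        = (n.choose (m + 1 + i) * (m : ℝ) ^ (2 * i + 1))
            * ((n - m - 1 - i) * (n - m + i + 1) * m ^ 2) := by
          linear_combination (m ^ (2 * i + 1) * m ^ 2 * ((n : ℝ) - m + i + 1)) * hup
      _ ≤ (n.choose (m - i) * ((n : ℝ) - m) ^ (2 * i + 1))
            * ((m - i) * (m + i + 2) * (n - m) ^ 2) :=
          mul_le_mul (ih (by omega)) hgain hlow (by positivity)
      _ = (n.choose (m - (i + 1)) : ℝ) * ((n - m) ^ (2 * i + 1) * (n - m) ^ 2)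
            * ((m + i + 2) * (n - m + i + 1)) := by
          linear_combination (((n : ℝ) - m) ^ (2 * i + 1) * (n - m) ^ 2 * (m + i + 2)) * hdown

lemma monotoneOn_mul_log_sub {a b : ℝ} (ha : 0 < a) (hab : a ≤ b) :
    MonotoneOn (fun s => a * Real.log (a + s) - a * Real.log (a - s)
      - (b * Real.log (b + s) - b * Real.log (b - s))) (Set.Ico 0 a) := by
  have hderiv : ∀ x ∈ Set.Ico 0 a,
      HasDerivAt (fun s => a * Real.log (a + s) - a * Real.log (a - s)
        - (b * Real.log (b + s) - b * Real.log (b - s)))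
      (2 * x ^ 2 * (b ^ 2 - a ^ 2) / ((a ^ 2 - x ^ 2) * (b ^ 2 - x ^ 2))) x := by
    rintro x ⟨hx0, hxa⟩
    have hb : x < b := hxa.trans_le hab
    have hlog : ∀ c : ℝ, x < c →
        HasDerivAt (fun s => c * Real.log (c + s) - c * Real.log (c - s))
          (c * (1 / (c + x)) - c * (-1 / (c - x))) x := fun c hc =>
      ((((hasDerivAt_id x).const_add c).log (by simp; linarith)).const_mul c).sub
        ((((hasDerivAt_id x).const_sub c).log (by simp; linarith)).const_mul c) |>.congr_deriv
          (by simp)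
    refine ((hlog a hxa).sub (hlog b hb)).congr_deriv ?_
    have : a - x ≠ 0 := by linarith
    have : b - x ≠ 0 := by linarith
    have : a + x ≠ 0 := by linarith
    have : b + x ≠ 0 := by linarith
    have : a ^ 2 - x ^ 2 ≠ 0 := by nlinarith
    have : b ^ 2 - x ^ 2 ≠ 0 := by nlinarith
    field_simp
    ring
  refine monotoneOn_of_hasDerivWithinAt_nonneg (convex_Ico 0 a)
    (fun x hx => (hderiv x hx).continuousAt.continuousWithinAt)
    (fun x hx => (hderiv x (interior_subset hx)).hasDerivWithinAt) fun x hx => ?_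
  rw [interior_Ico] at hx
  have hxb : x < b := hx.2.trans_le hab
  have : 0 < a ^ 2 - x ^ 2 := by nlinarith [hx.1, hx.2]
  have : 0 < b ^ 2 - x ^ 2 := by nlinarith [hx.1, hx.2]
  have : 0 ≤ b ^ 2 - a ^ 2 := by nlinarith
  positivity

lemma sub_pow_mul_add_pow_le {m k : ℕ} (hm : 0 < m) (hmk : m ≤ k) {σ : ℝ} (h0 : 0 ≤ σ)
    (h1 : σ ≤ m) :
    ((m : ℝ) - σ) ^ m * ((k : ℝ) + σ) ^ k
      ≤ ((m : ℝ) + σ) ^ m * ((k : ℝ) - σ) ^ k := by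
  have hmk' : (m : ℝ) ≤ k := by exact_mod_cast hmk
  rcases h1.eq_or_lt with rfl | hσ
  · rw [sub_self, zero_pow hm.ne', zero_mul]
    exact mul_nonneg (pow_nonneg (by positivity) _) (pow_nonneg (by linarith) _)
  have hmono := monotoneOn_mul_log_sub (a := m) (b := k) (by exact_mod_cast hm) hmk'
    ⟨le_rfl, by exact_mod_cast hm⟩ ⟨h0, hσ⟩ h0
  simp only [add_zero, sub_zero, sub_self] at hmono
  have hm0 : (0 : ℝ) < m - σ := by linarith
  have hk0 : (0 : ℝ) < k - σ := by linarith
  have hk1 : (0 : ℝ) < k + σ := by linarith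
  rw [← Real.log_le_log_iff (by positivity) (by positivity),
    Real.log_mul (by positivity) (by positivity), Real.log_mul (by positivity) (by positivity),
    Real.log_pow, Real.log_pow, Real.log_pow, Real.log_pow]
  linarith

lemma bernstein_eval_nonneg (n j : ℕ) {x : ℝ} (hx : x ∈ Set.Icc 0 1) :
    0 ≤ (bernsteinPolynomial ℝ n j).eval x := by
  simp only [bernsteinPolynomial, eval_mul, eval_pow, eval_sub, eval_one, eval_X, eval_natCast]
  exact mul_nonneg (mul_nonneg (Nat.cast_nonneg _) (pow_nonneg hx.1 _))
    (pow_nonneg (sub_nonneg.2 hx.2) _)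

lemma bernstein_eval_sub_le_eval_add {n m : ℕ} (hm : 0 < m) (h2m : 2 * m ≤ n) {s : ℝ}
    (hs0 : 0 ≤ s) (hs : s ≤ m / n) :
    (bernsteinPolynomial ℝ (n - 1) m).eval (m / n - s)
      ≤ (bernsteinPolynomial ℝ (n - 1) m).eval (m / n + s) := by
  have hn : (0 : ℝ) < n := by exact_mod_cast (show 0 < n by omega)
  have hmn : (m : ℝ) ≤ (n - m : ℕ) := by exact_mod_cast (show m ≤ n - m by omega)
  have hσ : n * s ≤ m := by rwa [le_div_iff₀ hn, mul_comm] at hs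
  -- `sub_pow_mul_add_pow_le` with `σ = n s` and `k = n - m`, divided by `n ^ n`
  have hkey := sub_pow_mul_add_pow_le hm (show m ≤ n - m by omega) (by positivity) hσ
  have e1 : (m : ℝ) / n - s = (m - n * s) / n := by field_simp
  have e2 : (m : ℝ) / n + s = (m + n * s) / n := by field_simp
  have e3 : 1 - ((m : ℝ) - n * s) / n = ((n - m : ℕ) + n * s) / n := by
    rw [Nat.cast_sub (by omega)]; field_simp; ring
  have e4 : 1 - ((m : ℝ) + n * s) / n = ((n - m : ℕ) - n * s) / n := by
    rw [Nat.cast_sub (by omega)]; field_simp; ring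
  have hscaled : ((m - n * s) / n) ^ m * (1 - (m - n * s) / n) ^ (n - m)
      ≤ ((m + n * s) / n) ^ m * (1 - (m + n * s) / n) ^ (n - m) := by
    rw [e3, e4, div_pow, div_pow, div_pow, div_pow, div_mul_div_comm, div_mul_div_comm]
    exact div_le_div_of_nonneg_right hkey (by positivity)
  simp only [bernsteinPolynomial, eval_mul, eval_pow, eval_sub, eval_one, eval_X, eval_natCast,
    mul_assoc, e1, e2]
  gcongr ?_ * ?_
  set t₁ := ((m : ℝ) - n * s) / n
  set t₂ := ((m : ℝ) + n * s) / n
  have ht₁ : 0 < 1 - t₁ := by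
    rw [e3]; have : (0 : ℝ) < (n - m : ℕ) := by exact_mod_cast (show 0 < n - m by omega)
    positivity
  have ht₂ : 0 ≤ 1 - t₂ := by
    rw [e4]; have : n * s ≤ (n - m : ℕ) := hσ.trans hmn
    exact div_nonneg (by linarith) hn.le
  have ht : 0 ≤ t₂ := by positivity
  -- the exponent here is `n - 1 - m`: drop one factor `1 - t`, which is larger at `t₁`
  rw [show n - m = n - 1 - m + 1 by omega, pow_succ, pow_succ, ← mul_assoc, ← mul_assoc]
    at hscaled
  refine le_of_mul_le_mul_right (hscaled.trans ?_) ht₁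
  gcongr
  linarith

noncomputable def binomialUpperTail (n m : ℕ) : ℝ[X] :=
  ∑ j ∈ Ico (m + 1) (n + 1), bernsteinPolynomial ℝ n j

section BinomialUpperTail

variable {n m : ℕ}

lemma sum_bernstein_add_binomialUpperTail (hmn : m ≤ n) :
    ∑ j ∈ range (m + 1), bernsteinPolynomial ℝ n j + binomialUpperTail n m = 1 := by
  rw [binomialUpperTail, sum_range_add_sum_Ico _ (by omega), bernsteinPolynomial.sum]

lemma derivative_binomialUpperTail (hmn : m < n) :
    derivative (binomialUpperTail n m) = n * bernsteinPolynomial ℝ (n - 1) m := by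
  rw [binomialUpperTail, derivative_sum, sum_Ico_eq_sum_range]
  simp_rw [show ∀ k, m + 1 + k = m + k + 1 from fun k => by omega,
    bernsteinPolynomial.derivative_succ, ← mul_sum]
  have htele := sum_range_sub' (fun k => bernsteinPolynomial ℝ (n - 1) (m + k)) (n + 1 - (m + 1))
  simp only [← add_assoc, add_zero] at htele
  rw [htele, bernsteinPolynomial.eq_zero_of_lt ℝ (show n - 1 < m + (n + 1 - (m + 1)) by omega),
    sub_zero]

lemma binomialUpperTail_eval_zero (hm : 0 < m) : (binomialUpperTail n m).eval 0 = 0 := by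
  rw [binomialUpperTail, eval_finsetSum]
  exact sum_eq_zero fun j hj => by
    rw [bernsteinPolynomial.eval_at_0, if_neg (by simp at hj; omega)]

lemma binomialUpperTail_eval_one (hmn : m < n) : (binomialUpperTail n m).eval 1 = 1 := by
  rw [binomialUpperTail, eval_finsetSum, sum_eq_single_of_mem n (by simp; omega)]
  · simp [bernsteinPolynomial.eval_at_1]
  · intro j _ hj
    rw [bernsteinPolynomial.eval_at_1, if_neg hj]

lemma integral_bernstein_eq_binomialUpperTail_sub (hmn : m < n) (x y : ℝ) :
    ∫ t in x..y, n * (bernsteinPolynomial ℝ (n - 1) m).eval t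
      = (binomialUpperTail n m).eval y - (binomialUpperTail n m).eval x := by
  refine intervalIntegral.integral_eq_sub_of_hasDerivAt
    (f := fun t => (binomialUpperTail n m).eval t) (fun t _ => ?_)
    ((continuous_const.mul (Polynomial.continuous _)).intervalIntegrable _ _)
  simpa [derivative_binomialUpperTail hmn] using (binomialUpperTail n m).hasDerivAt t

lemma binomialUpperTail_eval_mono (hmn : m < n) {x y : ℝ} (hx : 0 ≤ x) (hxy : x ≤ y)
    (hy : y ≤ 1) :
    (binomialUpperTail n m).eval x ≤ (binomialUpperTail n m).eval y := by
  rw [← sub_nonneg, ← integral_bernstein_eq_binomialUpperTail_sub hmn]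
  exact intervalIntegral.integral_nonneg hxy fun t ht =>
    mul_nonneg (Nat.cast_nonneg n) (bernstein_eval_nonneg _ _ ⟨hx.trans ht.1, ht.2.trans hy⟩)

lemma integral_bernstein_le_of_two_mul_le (hm : 0 < m) (h2m : 2 * m ≤ n) :
    ∫ t in (0 : ℝ)..m / n, n * (bernsteinPolynomial ℝ (n - 1) m).eval t
      ≤ ∫ t in (m / n : ℝ)..2 * (m / n), n * (bernsteinPolynomial ℝ (n - 1) m).eval t := by
  set G := fun t : ℝ => n * (bernsteinPolynomial ℝ (n - 1) m).eval t
  have hG : Continuous G := continuous_const.mul (Polynomial.continuous _)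
  have hleft := intervalIntegral.integral_comp_sub_left G (m / n : ℝ) (a := 0) (b := m / n)
  have hright := intervalIntegral.integral_comp_add_left G (m / n : ℝ) (a := 0) (b := m / n)
  rw [sub_self, sub_zero] at hleft
  rw [add_zero, ← two_mul] at hright
  rw [← hleft, ← hright]
  refine intervalIntegral.integral_mono_on (by positivity)
    ((hG.comp (by fun_prop)).intervalIntegrable _ _)
    ((hG.comp (by fun_prop)).intervalIntegrable _ _)
    fun s hs => ?_
  exact mul_le_mul_of_nonneg_left (bernstein_eval_sub_le_eval_add hm h2m hs.1 hs.2)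
    (Nat.cast_nonneg n)

lemma binomialUpperTail_eval_le_half_of_two_mul_le (hm : 0 < m) (h2m : 2 * m ≤ n) :
    (binomialUpperTail n m).eval ((m : ℝ) / n) ≤ 1 / 2 := by
  have hmn : m < n := by omega
  have h2c : 2 * ((m : ℝ) / n) ≤ 1 := by
    rw [← mul_div_assoc, div_le_one (by exact_mod_cast (show 0 < n by omega))]
    exact_mod_cast h2m
  -- `U(c) - U(0) ≤ U(2c) - U(c) ≤ U(1) - U(c)` for the upper tail `U` and `c = m / n`
  have hrefl := integral_bernstein_le_of_two_mul_le hm h2m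
  rw [integral_bernstein_eq_binomialUpperTail_sub hmn,
    integral_bernstein_eq_binomialUpperTail_sub hmn, binomialUpperTail_eval_zero hm] at hrefl
  have hmono := binomialUpperTail_eval_mono hmn (by positivity) h2c le_rfl
  rw [binomialUpperTail_eval_one hmn] at hmono
  linarith

lemma bernstein_eval_div {j : ℕ} (hn : 0 < n) (hj : j ≤ n) :
    (bernsteinPolynomial ℝ n j).eval ((m : ℝ) / n)
      = n.choose j * ((m : ℝ) ^ j * ((n : ℝ) - m) ^ (n - j)) / (n : ℝ) ^ n := by
  have hn' : (n : ℝ) ≠ 0 := by positivity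
  have h1 : 1 - (m : ℝ) / n = (n - m) / n := by field_simp
  rw [← Nat.add_sub_cancel' hj, pow_add, Nat.add_sub_cancel' hj]
  simp only [bernsteinPolynomial, eval_mul, eval_pow, eval_sub, eval_one, eval_X, eval_natCast, h1,
    div_pow]
  field_simp

lemma bernstein_eval_succ_add_le {i : ℕ} (hnm : n ≤ 2 * m) (hi : m + i < n) :
    (bernsteinPolynomial ℝ n (m + 1 + i)).eval ((m : ℝ) / n)
      ≤ (bernsteinPolynomial ℝ n (m - i)).eval ((m : ℝ) / n) := by
  rw [bernstein_eval_div (by omega) (by omega), bernstein_eval_div (by omega) (by omega)]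
  have hu : (0 : ℝ) ≤ n - m := by
    have : (m : ℝ) ≤ n := by exact_mod_cast (show m ≤ n by omega)
    linarith
  gcongr ?_ / _
  set r := (m : ℝ) ^ (m - i) * ((n : ℝ) - m) ^ (n - (m + 1 + i))
  calc (n.choose (m + 1 + i) : ℝ)
        * ((m : ℝ) ^ (m + 1 + i) * ((n : ℝ) - m) ^ (n - (m + 1 + i)))
      = (n.choose (m + 1 + i) * (m : ℝ) ^ (2 * i + 1)) * r := by
        rw [show (m : ℝ) ^ (m + 1 + i) = m ^ (2 * i + 1) * m ^ (m - i) by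
          rw [← pow_add]; congr 1; omega]
        ring
    _ ≤ (n.choose (m - i) * ((n : ℝ) - m) ^ (2 * i + 1)) * r :=
        mul_le_mul_of_nonneg_right (choose_mul_pow_le_choose_mul_pow hnm hi) (by positivity)
    _ = n.choose (m - i) * ((m : ℝ) ^ (m - i) * ((n : ℝ) - m) ^ (n - (m - i))) := by
        rw [show n - (m - i) = 2 * i + 1 + (n - (m + 1 + i)) by omega, pow_add]; ring

lemma binomialUpperTail_eval_le_sum_of_le_two_mul (hnm : n ≤ 2 * m) (hmn : m < n) :
    (binomialUpperTail n m).eval ((m : ℝ) / n)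
      ≤ ∑ j ∈ range (m + 1), (bernsteinPolynomial ℝ n j).eval ((m : ℝ) / n) := by
  have hc : (m : ℝ) / n ∈ Set.Icc 0 1 :=
    ⟨by positivity, div_le_one_of_le₀ (by exact_mod_cast hmn.le) (Nat.cast_nonneg n)⟩
  rw [binomialUpperTail, eval_finsetSum, sum_Ico_eq_sum_range]
  set b := fun j => (bernsteinPolynomial ℝ n j).eval ((m : ℝ) / n)
  calc ∑ i ∈ range (n + 1 - (m + 1)), b (m + 1 + i)
      ≤ ∑ i ∈ range (n + 1 - (m + 1)), b (m - i) :=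
        sum_le_sum fun i hi => bernstein_eval_succ_add_le hnm (by simp at hi; omega)
    _ ≤ ∑ i ∈ range (m + 1), b (m - i) :=
        sum_le_sum_of_subset_of_nonneg (range_subset_range.2 (by omega))
          fun j _ _ => bernstein_eval_nonneg n _ hc
    _ = ∑ j ∈ range (m + 1), b j := by simpa using sum_range_reflect b (m + 1)

lemma binomialUpperTail_eval_div_le_half (hm : 0 < m) (hmn : m < n) :
    (binomialUpperTail n m).eval ((m : ℝ) / n) ≤ 1 / 2 := by
  rcases le_total (2 * m) n with h2m | hnm
  · exact binomialUpperTail_eval_le_half_of_two_mul_le hm h2m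
  · have htotal := congrArg (eval ((m : ℝ) / n)) (sum_bernstein_add_binomialUpperTail hmn.le)
    rw [eval_add, eval_finsetSum, eval_one] at htotal
    linarith [binomialUpperTail_eval_le_sum_of_le_two_mul hnm hmn]

lemma half_le_sum_bernstein_eval (hm : 0 < m) (hmn : m < n) {p : ℝ} (hp0 : 0 ≤ p)
    (hp : p ≤ m / n) :
    1 / 2 ≤ ∑ j ∈ range (m + 1), (bernsteinPolynomial ℝ n j).eval p := by
  have htotal := congrArg (eval p) (sum_bernstein_add_binomialUpperTail hmn.le)
  rw [eval_add, eval_finsetSum, eval_one] at htotal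
  have hmono := binomialUpperTail_eval_mono hmn hp0 hp
    (div_le_one_of_le₀ (by exact_mod_cast hmn.le) (Nat.cast_nonneg n))
  linarith [binomialUpperTail_eval_div_le_half hm hmn]

end BinomialUpperTail

lemma MeasureTheory.Measure.mul_le_prod_of_forall_le {α β : Type*} [MeasurableSpace α]
    [MeasurableSpace β] (μ : Measure α) (ν : Measure β) [SFinite ν] {E : Set α}
    {F : Set (α × β)} {c : ENNReal} (h : ∀ x ∈ E, c ≤ ν (Prod.mk x ⁻¹' F)) :
    c * μ E ≤ μ.prod ν F := by
  set M := toMeasurable (μ.prod ν) F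
  have hM : MeasurableSet M := measurableSet_toMeasurable _ F
  calc c * μ E ≤ c * μ {x | c ≤ ν (Prod.mk x ⁻¹' M)} := by
        gcongr
        exact fun x hx =>
          (h x hx).trans (measure_mono (Set.preimage_mono (subset_toMeasurable _ F)))
    _ ≤ ∫⁻ x, ν (Prod.mk x ⁻¹' M) ∂μ :=
        mul_meas_ge_le_lintegral (measurable_measure_prodMk_left hM) c
    _ = μ.prod ν F := by rw [← Measure.prod_apply hM, measure_toMeasurable]

section EmpiricalCount

open scoped Classical

variable {𝒳 : Type*} {n : ℕ}

noncomputable def empiricalCount (A : Set 𝒳) (x : Fin n → 𝒳) : ℕ := #{i | x i ∈ A}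

lemma empiricalCount_le (A : Set 𝒳) (x : Fin n → 𝒳) : empiricalCount A x ≤ n :=
  (card_filter_le univ fun i => x i ∈ A).trans_eq (by simp)

lemma sum_indicator_one_eq_empiricalCount (A : Set 𝒳) (x : Fin n → 𝒳) :
    ∑ i, A.indicator (fun _ => (1 : ℝ)) (x i) = empiricalCount A x := by
  simp [empiricalCount, Set.indicator_apply, sum_boole]

lemma empiricalCount_compl (A : Set 𝒳) (x : Fin n → 𝒳) :
    empiricalCount Aᶜ x = n - empiricalCount A x := by
  have hsplit := card_filter_add_card_filter_not (s := univ) fun i => x i ∈ A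
  simp only [card_univ, Fintype.card_fin] at hsplit
  simp only [empiricalCount, Set.mem_compl_iff]
  omega

lemma mem_pi_ite_iff {A : Set 𝒳} {s : Finset (Fin n)} {x : Fin n → 𝒳} :
    x ∈ Set.univ.pi (fun i => if i ∈ s then A else Aᶜ)
      ↔ ({i | x i ∈ A} : Finset (Fin n)) = s := by
  rw [Set.mem_univ_pi, Finset.ext_iff]
  refine forall_congr' fun i => ?_
  by_cases hi : i ∈ s <;> simp [hi]

lemma empiricalCount_eq_iff {A : Set 𝒳} {x : Fin n → 𝒳} {j : ℕ} :
    empiricalCount A x = j ↔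
      ∃ s ∈ powersetCard j univ, x ∈ Set.univ.pi fun i => if i ∈ s then A else Aᶜ := by
  simp only [mem_pi_ite_iff, mem_powersetCard, subset_univ, true_and, empiricalCount]
  exact ⟨fun h => ⟨_, h, rfl⟩, by rintro ⟨s, hs, rfl⟩; exact hs⟩

variable [MeasurableSpace 𝒳]

lemma measurable_empiricalCount {A : Set 𝒳} (hA : MeasurableSet A) :
    Measurable (empiricalCount A : (Fin n → 𝒳) → ℕ) := by
  have hsum : (empiricalCount A : (Fin n → 𝒳) → ℕ)
      = fun x => ∑ i, if x i ∈ A then 1 else 0 := by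
    ext x; simp [empiricalCount, sum_boole]
  rw [hsum]
  exact Finset.measurable_sum _ fun i _ =>
    Measurable.ite (measurable_pi_apply i hA) measurable_const measurable_const

lemma pi_pi_ite (P : Measure 𝒳) [SigmaFinite P] (A : Set 𝒳) (s : Finset (Fin n)) :
    Measure.pi (fun _ => P) (Set.univ.pi fun i => if i ∈ s then A else Aᶜ)
      = P A ^ #s * P Aᶜ ^ (n - #s) := by
  rw [Measure.pi_pi]
  simp only [apply_ite P, prod_ite, prod_const, filter_not, filter_mem_eq_inter, univ_inter,
    card_sdiff_of_subset (subset_univ s), card_univ, Fintype.card_fin]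

lemma pi_empiricalCount_eq (P : Measure 𝒳) [SigmaFinite P] {A : Set 𝒳} (hA : MeasurableSet A)
    (j : ℕ) : Measure.pi (fun _ => P) {x : Fin n → 𝒳 | empiricalCount A x = j}
      = n.choose j * P A ^ j * P Aᶜ ^ (n - j) := by
  have hset : {x : Fin n → 𝒳 | empiricalCount A x = j}
      = ⋃ s ∈ powersetCard j univ, Set.univ.pi fun i => if i ∈ s then A else Aᶜ := by
    ext x; simp only [Set.mem_ofPred_eq, empiricalCount_eq_iff, Set.mem_iUnion, exists_prop]
  rw [hset, measure_biUnion_finset]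
  · rw [sum_congr rfl fun s hs => by rw [pi_pi_ite, (mem_powersetCard.1 hs).2], sum_const,
      card_powersetCard, card_univ, Fintype.card_fin, nsmul_eq_mul, mul_assoc]
  · intro s _ t _ hst
    exact Set.disjoint_left.2 fun x hs ht =>
      hst ((mem_pi_ite_iff.1 hs).symm.trans (mem_pi_ite_iff.1 ht))
  · exact fun s _ => MeasurableSet.univ_pi fun i => by split_ifs <;> simp [hA, hA.compl]

variable (P : Measure 𝒳) [IsProbabilityMeasure P]

lemma pi_empiricalCount_le_eq {A : Set 𝒳} (hA : MeasurableSet A) (m : ℕ) :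
    Measure.pi (fun _ => P) {x : Fin n → 𝒳 | empiricalCount A x ≤ m}
      = ENNReal.ofReal
          (∑ j ∈ range (m + 1), (bernsteinPolynomial ℝ n j).eval (P A).toReal) := by
  have hp : (P A).toReal ∈ Set.Icc 0 1 := ⟨ENNReal.toReal_nonneg, measureReal_le_one⟩
  have hset : {x : Fin n → 𝒳 | empiricalCount A x ≤ m}
      = ⋃ j ∈ range (m + 1), {x | empiricalCount A x = j} := by
    ext x; simp
  rw [hset, measure_biUnion_finset (f := fun j => {x | empiricalCount A x = j})
    (fun i _ j _ hij => Set.disjoint_left.2 fun x hi hj => hij (hi.symm.trans hj))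
    fun j _ => measurable_empiricalCount hA (measurableSet_singleton j),
    ENNReal.ofReal_sum_of_nonneg fun j _ => bernstein_eval_nonneg n j hp]
  refine sum_congr rfl fun j _ => ?_
  simp only [bernsteinPolynomial, eval_mul, eval_pow, eval_sub, eval_one, eval_X, eval_natCast]
  rw [pi_empiricalCount_eq P hA, prob_compl_eq_one_sub hA, ENNReal.ofReal_mul (by positivity),
    ENNReal.ofReal_mul (by positivity), ENNReal.ofReal_natCast, ENNReal.ofReal_pow hp.1,
    ENNReal.ofReal_pow (sub_nonneg.2 hp.2), ENNReal.ofReal_sub _ hp.1, ENNReal.ofReal_one,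
    ENNReal.ofReal_toReal (measure_ne_top P A)]

lemma half_le_pi_empiricalCount_div_le {A : Set 𝒳} (hA : MeasurableSet A) {δ : ℝ}
    (hδ : 1 < n * δ) : 2⁻¹ ≤ Measure.pi (fun _ => P)
      {x : Fin n → 𝒳 | (empiricalCount A x : ℝ) / n ≤ (P A).toReal + δ} := by
  set p := (P A).toReal
  have hp0 : 0 ≤ p := ENNReal.toReal_nonneg
  have hn : (0 : ℝ) < n :=
    Nat.cast_pos.2 <| Nat.pos_of_ne_zero fun h => by simp [h] at hδ; linarith
  -- the count threshold `m = ⌊n p⌋ + 1` lies strictly between `n p` and `n (p + δ)`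
  set m := ⌊n * p⌋₊ + 1
  have hnp : n * p < m := by push_cast [m]; exact Nat.lt_floor_add_one _
  have hsub : {x : Fin n → 𝒳 | empiricalCount A x ≤ m}
      ⊆ {x | (empiricalCount A x : ℝ) / n ≤ p + δ} := fun x hx => by
    have hx : (empiricalCount A x : ℝ) ≤ m := by exact_mod_cast hx
    have : (m : ℝ) ≤ n * p + 1 := by
      push_cast [m]; linarith [Nat.floor_le (by positivity : 0 ≤ n * p)]
    rw [Set.mem_ofPred_eq, div_le_iff₀ hn]
    linarith
  refine le_trans ?_ (measure_mono hsub)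
  rcases le_or_gt n m with hnm | hmn
  · have huniv : {x : Fin n → 𝒳 | empiricalCount A x ≤ m} = Set.univ :=
      Set.eq_univ_of_forall fun x => (empiricalCount_le A x).trans hnm
    rw [huniv, measure_univ]
    exact ENNReal.inv_le_one.2 one_le_two
  rw [pi_empiricalCount_le_eq P hA, ← ENNReal.ofReal_ofNat 2,
    ← ENNReal.ofReal_inv_of_pos two_pos, ← one_div]
  exact ENNReal.ofReal_le_ofReal (half_le_sum_bernstein_eval (Nat.succ_pos _) hmn hp0
    ((le_div_iff₀ hn).2 (by linarith)))

lemma half_le_pi_le_empiricalCount_div {A : Set 𝒳} (hA : MeasurableSet A) {δ : ℝ}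
    (hδ : 1 < n * δ) : 2⁻¹ ≤ Measure.pi (fun _ => P)
      {x : Fin n → 𝒳 | (P A).toReal - δ ≤ (empiricalCount A x : ℝ) / n} := by
  have hn : (0 : ℝ) < n :=
    Nat.cast_pos.2 <| Nat.pos_of_ne_zero fun h => by simp [h] at hδ; linarith
  refine (half_le_pi_empiricalCount_div_le P hA.compl hδ).trans_eq
    (congrArg _ (Set.ext fun x => ?_))
  simp only [Set.mem_ofPred_eq]
  rw [prob_compl_eq_one_sub hA, ENNReal.toReal_sub_of_le prob_le_one ENNReal.one_ne_top,
    ENNReal.toReal_one, empiricalCount_compl, Nat.cast_sub (empiricalCount_le A x), sub_div,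
    div_self hn.ne']
  constructor <;> intro h <;> linarith

lemma half_le_pi_deviation {A : Set 𝒳} (hA : MeasurableSet A) {ε : ℝ} (hε : 1 < n * (ε / 2))
    {x : Fin n → 𝒳} (hx : ε < |(empiricalCount A x : ℝ) / n - (P A).toReal|) :
    2⁻¹ ≤ Measure.pi (fun _ => P)
      {y : Fin n → 𝒳 |
        ε / 2 < |(empiricalCount A x : ℝ) / n - (empiricalCount A y : ℝ) / n|} := by
  rcases lt_abs.1 hx with hx | hx
  · refine (half_le_pi_empiricalCount_div_le P hA hε).trans (measure_mono fun y hy => ?_)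
    rw [Set.mem_ofPred_eq] at hy ⊢
    exact lt_abs.2 (Or.inl (by linarith))
  · refine (half_le_pi_le_empiricalCount_div P hA hε).trans (measure_mono fun y hy => ?_)
    rw [Set.mem_ofPred_eq] at hy ⊢
    exact lt_abs.2 (Or.inr (by linarith))

end EmpiricalCount

/-- Vapnik symmetrization: for `n > 2/ε`, the probability that some set
`A ∈ S` has empirical frequency deviating from `P(A)` by more than `ε` is at
most twice the probability (over a ghost sample) that some `A ∈ S` has the two
empirical frequencies deviating by more than `ε/2`. -/
theorem stmt10 (𝒳 : Type*) [MeasurableSpace 𝒳] (S : Set (Set 𝒳))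
    (hS : ∀ A ∈ S, MeasurableSet A)
    (P : Measure 𝒳) [IsProbabilityMeasure P]
    (n : ℕ) (ε : ℝ) (hε : 0 < ε) (hn : 2 / ε < n)
    (ν : (Fin n → 𝒳) → Set 𝒳 → ℝ)
    (hν : ν = fun x (A : Set 𝒳) => (∑ i, A.indicator (fun _ => (1 : ℝ)) (x i)) / n) :
    (Measure.pi fun _ : Fin n => P) {x | ∃ A ∈ S, ε < |ν x A - (P A).toReal|}
      ≤ 2 * ((Measure.pi fun _ : Fin n => P).prod (Measure.pi fun _ : Fin n => P))
          {p | ∃ A ∈ S, ε / 2 < |ν p.1 A - ν p.2 A|} := by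
  subst hν
  simp only [sum_indicator_one_eq_empiricalCount]
  have hnε : 1 < n * (ε / 2) := by
    rw [div_lt_iff₀ hε] at hn
    linarith
  rw [← ENNReal.inv_mul_le_iff two_ne_zero ENNReal.ofNat_ne_top]
  exact Measure.mul_le_prod_of_forall_le _ _ fun x ⟨A, hAS, hx⟩ =>
    (half_le_pi_deviation P (hS A hAS) hnε hx).trans (measure_mono fun y hy => ⟨A, hAS, hy⟩)
end
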